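/- arXiv:2004.10836 — 2 statements merged into one kernel-verified Lean document; each statement's English description precedes it below -/
import Mathlib

section
/- Let $\{f^j\}_{0\le j\le J}\subset\mathbb{R}$ and $\{g_1^j\},\{g_2^j\},\{y^j\}\subset[0,\infty)$ be sequences satisfying the discrete inequality $(y^j-y^{j-1})/k + f^j \le g_1^j y^j + g_2^j y^{j-1}$ for $1\le j\le J$, where $k>0$ is small enough that $kg_1^j<1$ for all $j$. Set $\omega^j = (1+kg_2^j)/(1-kg_1^j)$. Then for any nonnegative, nonincreasing smooth function $\phi$ compactly supported in $[0,T)$ with $\phi^j=\phi(jk)$ and $J=\lfloor T/k\rfloor$, one has $-k\sum_{j=0}^{J-1} \frac{\phi^{j+1}-\phi^j}{k}\Big(y^j\prod_{l=1}^j\frac{1}{\omega^l}\Big) + k\sum_{j=1}^{J-1}\phi^j\frac{f^j}{1-kg_1^j}\prod_{l=1}^j\frac{1}{\omega^l} \le \phi(0)y^0$. -/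
namespace Paper

/-- Discrete Gronwall-type lemma (Lemma 2.1). -/
theorem discrete_gronwall (T k : ℝ) (hT : 0 < T) (hk : 0 < k)
    (J : ℕ) (hJ : J = Nat.floor (T / k))
    (f g1 g2 y : ℕ → ℝ)
    (hg1 : ∀ j ≤ J, 0 ≤ g1 j) (hg2 : ∀ j ≤ J, 0 ≤ g2 j) (hy : ∀ j ≤ J, 0 ≤ y j)
    (hsmall : ∀ j ≤ J, k * g1 j < 1)
    (hineq : ∀ j, 1 ≤ j → j ≤ J →
      (y j - y (j - 1)) / k + f j ≤ g1 j * y j + g2 j * y (j - 1))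
    (ω : ℕ → ℝ) (hω : ∀ j, ω j = (1 + k * g2 j) / (1 - k * g1 j))
    (φ : ℝ → ℝ) (hφsmooth : ContDiff ℝ (⊤ : ℕ∞) φ)
    (hφsupp : ∃ T', T' < T ∧ ∀ t, T' ≤ t → φ t = 0)
    (hφnonneg : ∀ t, 0 ≤ φ t)
    (hφmono : ∀ s t, 0 ≤ s → s ≤ t → t ≤ T → φ t ≤ φ s) :
    -(k * ∑ j ∈ Finset.range J,
        ((φ (((j : ℝ) + 1) * k) - φ ((j : ℝ) * k)) / k) *
          (y j * ∏ l ∈ Finset.Icc 1 j, (ω l)⁻¹))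
      + k * ∑ j ∈ Finset.Icc 1 (J - 1),
          φ ((j : ℝ) * k) * (f j / (1 - k * g1 j)) * ∏ l ∈ Finset.Icc 1 j, (ω l)⁻¹
      ≤ φ 0 * y 0 := by
  have hk0 : (k : ℝ) ≠ 0 := ne_of_gt hk
  have hden : ∀ j ≤ J, 0 < 1 - k * g1 j := fun j hj => by linarith [hsmall j hj]
  have hωpos : ∀ j ≤ J, 0 < ω j := by
    intro j hj
    rw [hω j]
    exact div_pos (by nlinarith [hg2 j hj, hk.le]) (hden j hj)
  set P : ℕ → ℝ := fun j => ∏ l ∈ Finset.Icc 1 j, (ω l)⁻¹ with hP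
  have hPpos : ∀ j ≤ J, 0 < P j := by
    intro j hj
    exact Finset.prod_pos fun l hl =>
      inv_pos.2 (hωpos l (le_trans (Finset.mem_Icc.1 hl).2 hj))
  set Y : ℕ → ℝ := fun j => y j * P j with hYdef
  have hYpos : ∀ j ≤ J, 0 ≤ Y j := fun j hj => mul_nonneg (hy j hj) (hPpos j hj).le
  set F : ℕ → ℝ := fun j => f j / (1 - k * g1 j) * P j with hFdef
  -- key monotonicity step
  have key : ∀ m, m + 1 ≤ J → Y (m + 1) - Y m + k * F (m + 1) ≤ 0 := by
    intro m hm
    have hd := hden (m + 1) hm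
    have h2 := hineq (m + 1) (by omega) hm
    simp only [Nat.add_sub_cancel] at h2
    rw [div_add' _ _ _ hk0, div_le_iff₀ hk] at h2
    have step1 : y (m + 1) + k * f (m + 1) / (1 - k * g1 (m + 1)) ≤ ω (m + 1) * y m := by
      rw [hω, div_mul_eq_mul_div, le_div_iff₀ hd]
      have hexp : (y (m + 1) + k * f (m + 1) / (1 - k * g1 (m + 1))) * (1 - k * g1 (m + 1))
          = y (m + 1) * (1 - k * g1 (m + 1)) + k * f (m + 1) := by
        field_simp
      rw [hexp]
      nlinarith [h2]
    have hPm : P (m + 1) = P m * (ω (m + 1))⁻¹ := by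
      simp only [hP]
      rw [Finset.prod_Icc_succ_top (by omega : 1 ≤ m + 1)]
    have hωm := hωpos (m + 1) hm
    have hPmpos := hPpos (m + 1) hm
    have step2 := mul_le_mul_of_nonneg_right step1 hPmpos.le
    have hωP : ω (m + 1) * y m * P (m + 1) = y m * P m := by
      rw [hPm]
      field_simp
    have hexp2 : (y (m + 1) + k * f (m + 1) / (1 - k * g1 (m + 1))) * P (m + 1)
        = y (m + 1) * P (m + 1) + k * (f (m + 1) / (1 - k * g1 (m + 1)) * P (m + 1)) := by
      ring
    simp only [hYdef, hFdef]
    linarith [step2, hωP, hexp2]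
  -- main induction
  have main : ∀ n, n + 1 ≤ J →
      ∑ j ∈ Finset.range (n + 1), (φ ((j : ℝ) * k) - φ (((j : ℝ) + 1) * k)) * Y j
        + ∑ j ∈ Finset.Icc 1 n, φ ((j : ℝ) * k) * (k * F j)
      ≤ φ 0 * Y 0 - φ (((n : ℝ) + 1) * k) * Y n := by
    intro n
    induction n with
    | zero =>
      intro _
      simp [Finset.sum_range_succ]
      ring_nf
      simp
    | succ n ih =>
      intro hn
      have hn' : n + 1 ≤ J := by omega
      have ihh := ih hn'
      rw [Finset.sum_range_succ, Finset.sum_Icc_succ_top (by omega : 1 ≤ n + 1)]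
      have hkey := key (n + 1) hn
      have hφn : 0 ≤ φ (((n : ℝ) + 1) * k) := hφnonneg _
      have hc : ((n + 1 : ℕ) : ℝ) = (n : ℝ) + 1 := by push_cast; ring
      rw [hc]
      nlinarith [mul_nonpos_of_nonneg_of_nonpos hφn (key n hn'), ihh]
  -- conclude
  have e1 : ∀ n : ℕ, -(k * ∑ j ∈ Finset.range n,
        ((φ (((j : ℝ) + 1) * k) - φ ((j : ℝ) * k)) / k) * (y j * P j))
      = ∑ j ∈ Finset.range n, (φ ((j : ℝ) * k) - φ (((j : ℝ) + 1) * k)) * Y j := by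
    intro n
    rw [Finset.mul_sum, ← Finset.sum_neg_distrib]
    apply Finset.sum_congr rfl
    intro j _
    simp only [hYdef]
    field_simp
    ring
  have e2 : ∀ n : ℕ, k * ∑ j ∈ Finset.Icc 1 n,
        φ ((j : ℝ) * k) * (f j / (1 - k * g1 j)) * P j
      = ∑ j ∈ Finset.Icc 1 n, φ ((j : ℝ) * k) * (k * F j) := by
    intro n
    rw [Finset.mul_sum]
    apply Finset.sum_congr rfl
    intro j _
    simp only [hFdef]
    ring
  rcases J with _ | n
  · simp
    exact mul_nonneg (hφnonneg 0) (hy 0 le_rfl)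
  · have h0 : Nat.succ n - 1 = n := rfl
    rw [h0, e1, e2]
    have := main n le_rfl
    have hY0 : Y 0 = y 0 := by
      simp [hYdef, hP]
    have hnn : 0 ≤ φ (((n : ℝ) + 1) * k) * Y n := mul_nonneg (hφnonneg _) (hYpos n (by omega))
    rw [hY0] at this
    linarith
end Paper
end

section
/- Let $(\mathbf{v}^j,\mathbf{d}^j,\mathbf{q}^j,[n^\pm]^j,\Phi^j)$ solve the fully discrete structure-preserving scheme for the nematic electrolyte model on a strongly acute quasi-uniform triangulation with mass lumping, with $|\mathbf{d}^0(\mathbf{z})|=1$ at all nodes $\mathbf{z}$. Then $|\mathbf{d}^j(\mathbf{z})|=1$ for every node $\mathbf{z}$ of the triangulation and every $1\le j\le J$. -/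
open Matrix

/-- The mass-lumped midpoint scheme preserves the unit-length constraint for
the director at every node of the triangulation (Theorem 4.7 i)). The nodal
equation obtained from the scheme by testing with `c φ_z` reads
`d_t dʲ(z)·c + (dʲ⁻¹ᐟ²(z) × A)·(dʲ⁻¹ᐟ²(z) × c) + (dʲ⁻¹ᐟ²(z) × qʲ(z))·(dʲ⁻¹ᐟ²(z) × c) = 0`
for all `c ∈ ℝ³`. -/
theorem discrete_director_unit_length {ι : Type*} (J : ℕ) (k : ℝ) (hk : 0 < k)
    (dd A q : ℕ → ι → (Fin 3 → ℝ))
    (hscheme : ∀ j, 1 ≤ j → j ≤ J → ∀ z : ι, ∀ c : Fin 3 → ℝ,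
      (k⁻¹ • (dd j z - dd (j - 1) z)) ⬝ᵥ c
        + (crossProduct ((1 / 2 : ℝ) • (dd j z + dd (j - 1) z)) (A j z)) ⬝ᵥ
            (crossProduct ((1 / 2 : ℝ) • (dd j z + dd (j - 1) z)) c)
        + (crossProduct ((1 / 2 : ℝ) • (dd j z + dd (j - 1) z)) (q j z)) ⬝ᵥ
            (crossProduct ((1 / 2 : ℝ) • (dd j z + dd (j - 1) z)) c) = 0)
    (hinit : ∀ z : ι, dd 0 z ⬝ᵥ dd 0 z = 1) :
    ∀ j ≤ J, ∀ z : ι, dd j z ⬝ᵥ dd j z = 1 := by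
  intro j
  induction j with
  | zero => intro _ z; exact hinit z
  | succ j ih =>
    intro hj z
    have hprev := ih (Nat.le_of_succ_le hj) z
    have h := hscheme (j + 1) (Nat.succ_le_succ (Nat.zero_le j)) hj z
      ((1 / 2 : ℝ) • (dd (j + 1) z + dd j z))
    simp only [Nat.add_sub_cancel] at h
    rw [cross_self, dotProduct_zero, dotProduct_zero, add_zero, add_zero] at h
    rw [smul_dotProduct, dotProduct_smul, sub_dotProduct, dotProduct_add,
      dotProduct_add] at h
    have hcomm : dd j z ⬝ᵥ dd (j + 1) z = dd (j + 1) z ⬝ᵥ dd j z :=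
      dotProduct_comm _ _
    have hne : (k⁻¹ : ℝ) ≠ 0 := inv_ne_zero hk.ne'
    rw [hcomm, smul_eq_mul, smul_eq_mul] at h
    have : dd (j + 1) z ⬝ᵥ dd (j + 1) z = dd j z ⬝ᵥ dd j z := by
      rcases mul_eq_zero.mp h with h3 | h3
      · exact absurd h3 hne
      · rcases mul_eq_zero.mp h3 with h4 | h4
        · norm_num at h4
        · linarith
    rw [this, hprev]
end
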